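/- For every d ≥ 1, every d×d complex density matrix ρ, and all Hermitian d×d complex matrices X and Y, one has I(ρ,X)·J(ρ,Y) ≥ (1/4)·|tr(ρ·[X,Y])|², where [X,Y] = XY − YX. -/

import Mathlib

open Matrix
open scoped ComplexOrder

/-- The positive semidefinite square root of a positive semidefinite matrix
(the definition `Matrix.PosSemidef.sqrt` of Mathlib, Dec 2024, since removed). -/
noncomputable def Matrix.PosSemidef.sqrt {n : Type*} [Fintype n] [DecidableEq n] {𝕜 : Type*} [RCLike 𝕜]
    {A : Matrix n n 𝕜} (hA : A.PosSemidef) : Matrix n n 𝕜 :=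
  hA.1.eigenvectorUnitary.1 * diagonal ((↑) ∘ (√·) ∘ hA.1.eigenvalues) *
  (star hA.1.eigenvectorUnitary : Matrix n n 𝕜)

/-- Variance `V(ρ,X) = tr(ρX²) − (tr(ρX))²` (as a real number). -/
noncomputable def Vq {d : ℕ} (ρ X : Matrix (Fin d) (Fin d) ℂ) : ℝ :=
  (Matrix.trace (ρ * X ^ 2)).re - ((Matrix.trace (ρ * X)).re) ^ 2

/-- The centered observable `X₀ = X − tr(ρX)·1`. -/
noncomputable def Xc {d : ℕ} (ρ X : Matrix (Fin d) (Fin d) ℂ) : Matrix (Fin d) (Fin d) ℂ :=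
  X - Matrix.trace (ρ * X) • (1 : Matrix (Fin d) (Fin d) ℂ)

/-- Wigner–Yanase skew information `I(ρ,X) = tr(ρX²) − tr(√ρ X √ρ X)`. -/
noncomputable def Iq {d : ℕ} {ρ : Matrix (Fin d) (Fin d) ℂ} (hρ : ρ.PosSemidef)
    (X : Matrix (Fin d) (Fin d) ℂ) : ℝ :=
  (Matrix.trace (ρ * X ^ 2)).re - (Matrix.trace (hρ.sqrt * X * hρ.sqrt * X)).re

/-- Classical uncertainty `C(ρ,X) = tr(√ρ X₀ √ρ X₀)`. -/
noncomputable def Cq {d : ℕ} {ρ : Matrix (Fin d) (Fin d) ℂ} (hρ : ρ.PosSemidef)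
    (X : Matrix (Fin d) (Fin d) ℂ) : ℝ :=
  (Matrix.trace (hρ.sqrt * Xc ρ X * hρ.sqrt * Xc ρ X)).re

/-- `J(ρ,X) = (1/2)·tr(({√ρ, X₀})²)`. -/
noncomputable def Jq {d : ℕ} {ρ : Matrix (Fin d) (Fin d) ℂ} (hρ : ρ.PosSemidef)
    (X : Matrix (Fin d) (Fin d) ℂ) : ℝ :=
  (1 / 2) * (Matrix.trace ((hρ.sqrt * Xc ρ X + Xc ρ X * hρ.sqrt) ^ 2)).re

/-- Quantum uncertainty `U(ρ,X) = √(I(ρ,X)·J(ρ,X))`. -/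
noncomputable def Uq {d : ℕ} {ρ : Matrix (Fin d) (Fin d) ℂ} (hρ : ρ.PosSemidef)
    (X : Matrix (Fin d) (Fin d) ℂ) : ℝ :=
  Real.sqrt (Iq hρ X * Jq hρ X)

/-! With `s = √ρ`, `A = [s, X]` and `B = {s, Y₀}` one has `I(ρ,X) = ½ tr(A†A)` and
`J(ρ,Y) = ½ tr(B†B)`, while cyclicity of the trace and `s² = ρ` give `tr(A†B) = tr(ρ[Y₀,X])`,
and `[Y₀,X] = [Y,X]`. The inequality is then Cauchy–Schwarz for the Hilbert–Schmidt inner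
product `⟨A, B⟩ = tr(A†B)`. -/

namespace Matrix

variable {n : Type*} [Fintype n]

section RCLike

variable {𝕜 : Type*} [RCLike 𝕜]

theorem norm_trace_conjTranspose_mul_sq_le (A B : Matrix n n 𝕜) :
    ‖(Aᴴ * B).trace‖ ^ 2 ≤ RCLike.re (Aᴴ * A).trace * RCLike.re (Bᴴ * B).trace := by
  classical
  let := toMatrixSeminormedAddCommGroup (1 : Matrix n n 𝕜) PosSemidef.one
  let := toMatrixInnerProductSpace (1 : Matrix n n 𝕜) PosSemidef.one
  -- this inner product is `⟪P, Q⟫ = tr(Q * 1 * Pᴴ)`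
  have inner_conjTranspose : ∀ P Q : Matrix n n 𝕜, inner 𝕜 Pᴴ Qᴴ = (Qᴴ * P).trace := fun P Q ↦ by
    change (Qᴴ * 1 * Pᴴᴴ).trace = _
    rw [mul_one, conjTranspose_conjTranspose]
  have h_swap : (Bᴴ * A).trace = star (Aᴴ * B).trace := by
    rw [← trace_conjTranspose, conjTranspose_mul, conjTranspose_conjTranspose]
  have h := inner_mul_inner_self_le (𝕜 := 𝕜) Bᴴ Aᴴ
  rw [inner_conjTranspose, inner_conjTranspose, inner_conjTranspose, inner_conjTranspose, h_swap,
    norm_star, ← sq, mul_comm] at h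
  exact h

variable [DecidableEq n]

theorem PosSemidef.isHermitian_sqrt {A : Matrix n n 𝕜} (hA : A.PosSemidef) :
    hA.sqrt.IsHermitian := by
  rw [PosSemidef.sqrt, star_eq_conjTranspose]
  refine isHermitian_mul_mul_conjTranspose _ (isHermitian_diagonal_of_self_adjoint _ ?_)
  ext i
  simp

theorem PosSemidef.sqrt_mul_self {A : Matrix n n 𝕜} (hA : A.PosSemidef) :
    hA.sqrt * hA.sqrt = A := by
  conv_rhs => rw [hA.isHermitian.spectral_theorem]
  simp only [PosSemidef.sqrt, Unitary.conjStarAlgAut_apply, Matrix.mul_assoc]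
  congr 1
  rw [← Matrix.mul_assoc (star _ : Matrix n n 𝕜), Unitary.coe_star_mul_self, Matrix.one_mul,
    ← Matrix.mul_assoc, diagonal_mul_diagonal]
  congr 2
  ext i
  simp [← RCLike.ofReal_mul, Real.mul_self_sqrt (hA.eigenvalues_nonneg i)]

end RCLike

section CommRing

variable {R : Type*} [CommRing R]

theorem trace_commutator_mul_commutator (s X : Matrix n n R) :
    ((X * s - s * X) * (s * X - X * s)).trace =
      2 * (s * s * (X * X)).trace - 2 * (s * X * s * X).trace := by
  have h₁ : (X * s * (s * X)).trace = (s * s * (X * X)).trace := by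
    rw [mul_assoc, trace_mul_comm X]; simp only [mul_assoc]
  have h₂ : (X * s * (X * s)).trace = (s * X * s * X).trace := by
    rw [mul_assoc, trace_mul_comm X]; simp only [mul_assoc]
  have h₃ : (s * X * (X * s)).trace = (s * s * (X * X)).trace := by
    rw [← mul_assoc, trace_mul_comm _ s]; simp only [mul_assoc]
  simp only [mul_sub, sub_mul, trace_sub, h₁, h₂, h₃, ← mul_assoc (s * X) s X]
  ring

theorem trace_commutator_mul_anticommutator (s X Z : Matrix n n R) :
    ((X * s - s * X) * (s * Z + Z * s)).trace = (s * s * (Z * X - X * Z)).trace := by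
  have h₁ : (X * s * (s * Z)).trace = (s * s * (Z * X)).trace := by
    rw [mul_assoc, trace_mul_comm X]; simp only [mul_assoc]
  have h₂ : (X * s * (Z * s)).trace = (s * X * (s * Z)).trace := by
    rw [← mul_assoc, trace_mul_comm _ s]; simp only [mul_assoc]
  have h₃ : (s * X * (Z * s)).trace = (s * s * (X * Z)).trace := by
    rw [← mul_assoc, trace_mul_comm _ s]; simp only [mul_assoc]
  simp only [mul_sub, sub_mul, mul_add, trace_sub, trace_add, h₁, h₂, h₃]
  ring

section StarRing

variable [StarRing R]

theorem IsHermitian.conjTranspose_commutator {A B : Matrix n n R} (hA : A.IsHermitian)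
    (hB : B.IsHermitian) : (A * B - B * A)ᴴ = B * A - A * B := by
  rw [conjTranspose_sub, conjTranspose_mul, conjTranspose_mul, hA.eq, hB.eq]

theorem IsHermitian.anticommutator {A B : Matrix n n R} (hA : A.IsHermitian)
    (hB : B.IsHermitian) : (A * B + B * A).IsHermitian := by
  rw [IsHermitian, conjTranspose_add, conjTranspose_mul, conjTranspose_mul, hA.eq, hB.eq, add_comm]

theorem IsHermitian.star_trace_mul {A B : Matrix n n R} (hA : A.IsHermitian)
    (hB : B.IsHermitian) : star (A * B).trace = (A * B).trace := by
  rw [← trace_conjTranspose, conjTranspose_mul, hA.eq, hB.eq, trace_mul_comm]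

end StarRing

end CommRing

end Matrix

section Uncertainty

open Matrix

variable {d : ℕ} {ρ : Matrix (Fin d) (Fin d) ℂ}

theorem isHermitian_Xc (hρ : ρ.IsHermitian) {Y : Matrix (Fin d) (Fin d) ℂ} (hY : Y.IsHermitian) :
    (Xc ρ Y).IsHermitian := by
  rw [IsHermitian, Xc, conjTranspose_sub, conjTranspose_smul, conjTranspose_one, hY.eq,
    hρ.star_trace_mul hY]

theorem Xc_commutator (ρ X Y : Matrix (Fin d) (Fin d) ℂ) :
    Xc ρ Y * X - X * Xc ρ Y = Y * X - X * Y := by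
  simp only [Xc, sub_mul, mul_sub, smul_mul_assoc, mul_smul_comm, one_mul, mul_one]
  abel

theorem Iq_eq_re_trace (hρ : ρ.PosSemidef) {X : Matrix (Fin d) (Fin d) ℂ} (hX : X.IsHermitian) :
    Iq hρ X = 1 / 2 * ((hρ.sqrt * X - X * hρ.sqrt)ᴴ * (hρ.sqrt * X - X * hρ.sqrt)).trace.re := by
  rw [hρ.isHermitian_sqrt.conjTranspose_commutator hX, trace_commutator_mul_commutator,
    hρ.sqrt_mul_self, Iq, sq]
  simp only [Complex.sub_re, Complex.mul_re, Complex.re_ofNat, Complex.im_ofNat]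
  ring

theorem Jq_eq_re_trace (hρ : ρ.PosSemidef) {Y : Matrix (Fin d) (Fin d) ℂ} (hY : Y.IsHermitian) :
    Jq hρ Y = 1 / 2 * ((hρ.sqrt * Xc ρ Y + Xc ρ Y * hρ.sqrt)ᴴ *
      (hρ.sqrt * Xc ρ Y + Xc ρ Y * hρ.sqrt)).trace.re := by
  rw [(hρ.isHermitian_sqrt.anticommutator (isHermitian_Xc hρ.isHermitian hY)).eq, Jq, sq]

end Uncertainty

theorem IJ_uncertainty_general (d : ℕ) (ρ X Y : Matrix (Fin d) (Fin d) ℂ)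
    (hρ : ρ.PosSemidef) (hX : X.IsHermitian) (hY : Y.IsHermitian) :
    Iq hρ X * Jq hρ Y ≥
      (1 / 4) * ‖Matrix.trace (ρ * (X * Y - Y * X))‖ ^ 2 := by
  set A := hρ.sqrt * X - X * hρ.sqrt
  set B := hρ.sqrt * Xc ρ Y + Xc ρ Y * hρ.sqrt
  have h_cross : ‖(Aᴴ * B).trace‖ = ‖(ρ * (X * Y - Y * X)).trace‖ := by
    rw [hρ.isHermitian_sqrt.conjTranspose_commutator hX, trace_commutator_mul_anticommutator,
      hρ.sqrt_mul_self, Xc_commutator, ← neg_sub, mul_neg, trace_neg, norm_neg]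
  calc (1 / 4) * ‖(ρ * (X * Y - Y * X)).trace‖ ^ 2
      ≤ 1 / 4 * ((Aᴴ * A).trace.re * (Bᴴ * B).trace.re) := by
        rw [← h_cross]
        gcongr
        exact norm_trace_conjTranspose_mul_sq_le A B
    _ = Iq hρ X * Jq hρ Y := by
        rw [Iq_eq_re_trace hρ hX, Jq_eq_re_trace hρ hY]
        ring

/-- I(ρ,X)·J(ρ,Y) ≥ (1/4)·|tr(ρ[X,Y])|². -/
theorem IJ_uncertainty (d : ℕ) (hd : 1 ≤ d) (ρ X Y : Matrix (Fin d) (Fin d) ℂ)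
    (hρ : ρ.PosSemidef) (hρtr : Matrix.trace ρ = 1)
    (hX : X.IsHermitian) (hY : Y.IsHermitian) :
    Iq hρ X * Jq hρ Y ≥
      (1 / 4) * ‖Matrix.trace (ρ * (X * Y - Y * X))‖ ^ 2 :=
  IJ_uncertainty_general d ρ X Y hρ hX hY
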